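/- arXiv:1705.07066 — 4 statements merged into one kernel-verified Lean document; each statement's English description precedes it below -/
import Mathlib

section
/- Let H be a simple graph with a legal colouring c, and suppose {x1, x2, x3, y} forms a clique of size 4 in H. Then H has a legal colouring c′ in which the triangle x1x2x3 is not monochromatic. -/
open SimpleGraph

def IsCycleEdgeSet {V : Type*} (G : SimpleGraph V) (s : Set (Sym2 V)) : Prop :=
  ∃ (v : V) (w : G.Walk v v), w.IsCycle ∧ s = {e | e ∈ w.edges}

def HasCycleDecompLE {V : Type*} (G : SimpleGraph V) (m : ℕ) : Prop :=
  ∃ (n : ℕ) (f : Fin n → Set (Sym2 V)), n ≤ m ∧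
    (∀ i, IsCycleEdgeSet G (f i)) ∧
    (Pairwise fun i j => Disjoint (f i) (f j)) ∧
    (⋃ i, f i) = G.edgeSet

def IsLegalColouringWith {V : Type*} (G : SimpleGraph V) (c : Sym2 V → ℕ) (m : ℕ) : Prop :=
  (∀ e ∈ G.edgeSet, 1 ≤ c e ∧ c e ≤ m) ∧
  ∀ i : ℕ, ({e ∈ G.edgeSet | c e = i}).Nonempty → IsCycleEdgeSet G {e ∈ G.edgeSet | c e = i}

def IsLegalColouring {V : Type*} [Fintype V] (G : SimpleGraph V) (c : Sym2 V → ℕ) : Prop :=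
  IsLegalColouringWith G c ((Fintype.card V - 1) / 2)

/-!
Let `i` be the colour of the monochromatic triangle `T = x1x2x3`. Its colour class is a cycle
containing the three edges of `T`, so it is `T` itself. The spokes `x1y`, `x2y`, `x3y` lie on the
cycles `A`, `B`, `D` of their colours `a`, `b`, `d`, all different from `i`.

If one of these cycles, say `A = yx1 + P` with `P` a path from `x1` to `y`, passes through another
triangle vertex `x2`, split `P` at `x2` into `P1 : x1 → x2` and `P2 : x2 → y`. If `x3` is not on
`P1` (otherwise exchange the roles of `x2` and `x3`), then `x1x2 + P2 + yx1` and
`x2x3 + x3x1 + P1` are edge-disjoint cycles with union `A ∪ T`. Giving them the colours `i` and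
`a` yields a legal colouring in which `T` has both colours.

Otherwise `A` avoids `x2, x3`, `B` avoids `x3` and `D` avoids `x1`, so `a, b, d` are distinct, and
rerouting each spoke through the next triangle vertex gives the cycles `A - x1y + x1x2 + x2y`,
`B - x2y + x2x3 + x3y` and `D - x3y + x3x1 + x1y`. They partition `A ∪ B ∪ D ∪ T`; colouring them
`a`, `b`, `d` and dropping the colour `i` gives `T` three different colours.
-/

section

variable {V : Type*} {G : SimpleGraph V}

namespace SimpleGraph.Walk

lemma IsPath.exists_eq_cons_of_mem_edges {u v w : V} {p : G.Walk u w} (hp : p.IsPath)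
    (h : s(u, v) ∈ p.edges) : ∃ (huv : G.Adj u v) (q : G.Walk v w), p = cons huv q := by
  cases p with
  | nil => simp at h
  | cons huv' q =>
    rw [edges_cons, List.mem_cons] at h
    rcases h with h | h
    · obtain rfl := Sym2.congr_right.mp h
      exact ⟨huv', q, rfl⟩
    · exact absurd (q.fst_mem_support_of_mem_edges h) ((cons_isPath_iff _ _).mp hp).2

lemma IsCycle.exists_split_triangle_of_notMem_takeUntil [DecidableEq V] {p y : V}
    {hyp : G.Adj y p} {P : G.Walk p y} (hC : (cons hyp P).IsCycle) {q r : V}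
    (hpq : G.Adj p q) (hqr : G.Adj q r) (hrp : G.Adj r p) (hqy : q ≠ y) (hry : r ≠ y)
    (hpqP : s(p, q) ∉ P.edges) (hqrP : s(q, r) ∉ P.edges) (hrpP : s(r, p) ∉ P.edges)
    (hq : q ∈ P.support) (hr : r ∉ (P.takeUntil q hq).support) :
    ∃ F1 F2 : Set (Sym2 V), IsCycleEdgeSet G F1 ∧ IsCycleEdgeSet G F2 ∧ Disjoint F1 F2 ∧
      F1 ∪ F2 = {e | e ∈ (cons hyp P).edges} ∪ {s(p, q), s(q, r), s(r, p)} ∧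
      s(p, q) ∈ F1 ∧ s(q, r) ∈ F2 := by
  obtain ⟨hP, hyP⟩ := (cons_isCycle_iff P hyp).mp hC
  set P1 := P.takeUntil q hq
  set P2 := P.dropUntil q hq
  have hP1 := P.edges_takeUntil_subset_edges hq
  have hP2 := P.edges_dropUntil_subset_edges hq
  have hedges : P.edges = P1.edges ++ P2.edges := by rw [← edges_append, take_spec]
  have hP12 : ∀ e ∈ P1.edges, e ∉ P2.edges := by
    have := hP.isTrail.edges_nodup
    rw [hedges, List.nodup_append] at this
    exact fun e h1 h2 => this.2.2 e h1 e h2 rfl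
  have hpP2 : p ∉ P2.support := by
    have := hP.support_nodup
    rw [← take_spec P hq, support_append, List.nodup_append] at this
    rw [← cons_tail_support, List.mem_cons]
    rintro (h | h)
    · exact hpq.ne h
    · exact this.2.2 p P1.start_mem_support p h rfl
  have hC1 : (cons hpq (P2.concat hyp)).IsCycle := by
    refine (cons_isCycle_iff _ _).mpr ⟨(hP.dropUntil hq).concat hpP2 _, ?_⟩
    rw [edges_concat, List.concat_eq_append, List.mem_append, List.mem_singleton, not_or]
    exact ⟨fun h => hpqP (hP2 h), by simp [hqy, hpq.ne']⟩
  have hC2 : (cons hqr (cons hrp P1)).IsCycle := by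
    refine (cons_isCycle_iff _ _).mpr ⟨(hP.takeUntil hq).cons hr, ?_⟩
    rw [edges_cons, List.mem_cons, not_or]
    exact ⟨by simp [hpq.ne', hrp.ne], fun h => hqrP (hP1 h)⟩
  refine ⟨_, _, ⟨p, _, hC1, rfl⟩, ⟨q, _, hC2, rfl⟩, ?_, ?_, by simp, by simp⟩
  · rw [Set.disjoint_left]
    intro e h1 h2
    simp only [Set.mem_ofPred_eq, edges_cons, edges_concat, List.concat_eq_append,
      List.mem_cons, List.mem_append, List.not_mem_nil, or_false] at h1 h2
    rcases h1 with rfl | h1 | rfl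
    · rcases h2 with h2 | h2 | h2
      · exact hrp.ne' (Sym2.congr_left.mp (h2.trans Sym2.eq_swap))
      · exact hqr.ne (Sym2.congr_right.mp (h2.trans Sym2.eq_swap))
      · exact hpqP (hP1 h2)
    · rcases h2 with rfl | rfl | h2
      · exact hqrP (hP2 h1)
      · exact hrpP (hP2 h1)
      · exact hP12 _ h2 h1
    · rcases h2 with h2 | h2 | h2
      · rcases Sym2.eq_iff.mp h2 with ⟨h, -⟩ | ⟨h, -⟩
        exacts [hqy h.symm, hry h.symm]
      · exact hry (Sym2.congr_left.mp h2).symm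
      · exact hyP (hP1 h2)
  · ext e
    simp only [Set.mem_union, Set.mem_ofPred_eq, edges_cons, edges_concat,
      List.concat_eq_append, List.mem_cons, List.mem_append, List.not_mem_nil, or_false,
      hedges, Set.mem_insert_iff, Set.mem_singleton_iff]
    tauto

end SimpleGraph.Walk

open Walk

namespace IsCycleEdgeSet

lemma exists_cons {S : Set (Sym2 V)} (hS : IsCycleEdgeSet G S) {p y : V} (he : s(p, y) ∈ S) :
    ∃ (hyp : G.Adj y p) (P : G.Walk p y), (cons hyp P).IsCycle ∧
      S = {e | e ∈ (cons hyp P).edges} := by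
  classical
  obtain ⟨v, W, hW, rfl⟩ := hS
  have hy : y ∈ W.support := W.snd_mem_support_of_mem_edges he
  have hrot := (W.rotate_edges y hy).perm
  suffices ∃ (hyp : G.Adj y p) (P : G.Walk p y), (cons hyp P).IsCycle ∧
      ∀ e, e ∈ (cons hyp P).edges ↔ e ∈ (W.rotate y hy).edges by
    obtain ⟨hyp, P, hP, hmem⟩ := this
    exact ⟨hyp, P, hP, by ext e; rw [Set.mem_ofPred_eq, Set.mem_ofPred_eq, hmem, hrot.mem_iff]⟩
  have hW' := hW.rotate hy
  have he' : s(y, p) ∈ (W.rotate y hy).edges := hrot.mem_iff.mpr (Sym2.eq_swap ▸ he)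
  generalize W.rotate y hy = W' at hW' he'
  cases W' with
  | nil => simp at he'
  | @cons _ u _ h q =>
    rw [edges_cons, List.mem_cons] at he'
    rcases he' with he' | he'
    · obtain rfl := Sym2.congr_right.mp he'
      exact ⟨h, q, hW', fun _ => Iff.rfl⟩
    · -- the edge `yp` is the last edge of the cycle, so it is the first one of the reversed cycle
      have hq := ((cons_isCycle_iff q h).mp hW').1.reverse
      obtain ⟨hyp, r, hr⟩ := hq.exists_eq_cons_of_mem_edges (by simpa using he')
      have hrev : (cons h q).reverse = cons hyp (r.concat h.symm) := by
        rw [reverse_cons, hr, concat_eq_append, cons_append]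
      refine ⟨hyp, r.concat h.symm, hrev ▸ hW'.reverse, fun e => ?_⟩
      rw [← hrev, edges_reverse, List.mem_reverse]

lemma eq_triangle {S : Set (Sym2 V)} (hS : IsCycleEdgeSet G S) {x1 x2 x3 : V}
    (h12 : s(x1, x2) ∈ S) (h23 : s(x2, x3) ∈ S) (h31 : s(x3, x1) ∈ S) :
    S = {s(x1, x2), s(x2, x3), s(x3, x1)} := by
  obtain ⟨h21, P, hC, rfl⟩ := hS.exists_cons h12
  have h23' := (cons h21 P).adj_of_mem_edges h23
  have h31' := (cons h21 P).adj_of_mem_edges h31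
  have hP := ((cons_isCycle_iff P h21).mp hC).1
  obtain ⟨h13, P', rfl⟩ := hP.exists_eq_cons_of_mem_edges (v := x3) (by
    simp only [Set.mem_ofPred_eq, edges_cons, List.mem_cons] at h31
    rw [Sym2.eq_swap]
    refine h31.resolve_left ?_
    simp [h23'.ne.symm, h21.ne'])
  obtain ⟨h32, P'', rfl⟩ := hP.of_cons.exists_eq_cons_of_mem_edges (v := x2) (by
    simp only [Set.mem_ofPred_eq, edges_cons, List.mem_cons] at h23
    rw [Sym2.eq_swap]
    refine (h23.resolve_left ?_).resolve_left ?_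
    · simp [h31'.ne, h21.ne]
    · simp [h21.ne, h23'.ne])
  obtain rfl := (isPath_iff_nil.mp hP.of_cons.of_cons).eq_nil
  ext e
  simp only [Set.mem_ofPred_eq, edges_cons, edges_nil, List.mem_cons, List.not_mem_nil,
    Set.mem_insert_iff, Set.mem_singleton_iff, or_false]
  rw [Sym2.eq_swap (a := x2), Sym2.eq_swap (a := x1) (b := x3), Sym2.eq_swap (a := x3) (b := x2)]
  tauto

lemma reroute {S : Set (Sym2 V)} (hS : IsCycleEdgeSet G S) {p q y : V} (hpy : s(p, y) ∈ S)
    (hpq : G.Adj p q) (hqy : G.Adj q y) (hq : ∀ e ∈ S, q ∉ e) :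
    IsCycleEdgeSet G (insert s(p, q) (insert s(q, y) (S \ {s(p, y)}))) := by
  obtain ⟨hyp, P, hC, rfl⟩ := hS.exists_cons hpy
  obtain ⟨hP, hyP⟩ := (cons_isCycle_iff P hyp).mp hC
  have hqP : q ∉ P.support := by
    rw [mem_support_iff_exists_mem_edges]
    rintro (rfl | ⟨e, he, hqe⟩)
    · exact hqy.ne rfl
    · exact hq e (List.mem_cons_of_mem _ he) hqe
  have hPpy : ∀ e ∈ P.edges, e ≠ s(p, y) := fun e he h => hyP (Sym2.eq_swap ▸ h ▸ he)
  refine ⟨q, cons hpq.symm (P.concat hqy.symm),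
    (cons_isCycle_iff _ _).mpr ⟨hP.concat hqP _, ?_⟩, ?_⟩
  · rw [edges_concat, List.concat_eq_append, List.mem_append, List.mem_singleton, not_or]
    refine ⟨fun h => hqP (P.fst_mem_support_of_mem_edges h), ?_⟩
    simp [hqy.ne, hyp.ne']
  · ext e
    simp only [Set.mem_insert_iff, Set.mem_sdiff, Set.mem_ofPred_eq, Set.mem_singleton_iff,
      edges_cons, edges_concat, List.concat_eq_append, List.mem_append, List.mem_cons,
      List.not_mem_nil, or_false]
    rw [Sym2.eq_swap (a := y) (b := p), Sym2.eq_swap (a := q) (b := p),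
      Sym2.eq_swap (a := y) (b := q)]
    have := hPpy e
    tauto

lemma exists_split_triangle {S : Set (Sym2 V)} (hS : IsCycleEdgeSet G S)
    {p q r y : V} (hpy : s(p, y) ∈ S) (hpq : G.Adj p q) (hqr : G.Adj q r) (hrp : G.Adj r p)
    (hqy : q ≠ y) (hry : r ≠ y) (hST : Disjoint S {s(p, q), s(q, r), s(r, p)})
    (hq : ∃ e ∈ S, q ∈ e) :
    ∃ F1 F2 : Set (Sym2 V), IsCycleEdgeSet G F1 ∧ IsCycleEdgeSet G F2 ∧ Disjoint F1 F2 ∧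
      F1 ∪ F2 = S ∪ {s(p, q), s(q, r), s(r, p)} ∧
      (s(p, q) ∈ F1 ∨ s(r, p) ∈ F1) ∧ s(q, r) ∈ F2 := by
  classical
  obtain ⟨hyp, P, hC, rfl⟩ := hS.exists_cons hpy
  have hT : ∀ e ∈ ({s(p, q), s(q, r), s(r, p)} : Set (Sym2 V)), e ∉ P.edges :=
    fun e he hP => Set.disjoint_right.mp hST he (List.mem_cons_of_mem _ hP)
  have hqP : q ∈ P.support := by
    obtain ⟨e, he, hqe⟩ := hq
    have := (cons hyp P).mem_support_iff_exists_mem_edges.mpr (Or.inr ⟨e, he, hqe⟩)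
    exact (List.mem_cons.mp this).resolve_left hqy
  by_cases hr : r ∈ (P.takeUntil q hqP).support
  · -- `r` comes before `q` on `P`, so the roles of `q` and `r` are exchanged
    have hrP := P.support_takeUntil_subset_support hqP hr
    obtain ⟨F1, F2, hF1, hF2, hF12, hun, hrp1, hrq2⟩ :=
      hC.exists_split_triangle_of_notMem_takeUntil hrp.symm hqr.symm hpq.symm hry hqy
        (hT _ (by simp [Sym2.eq_swap])) (hT _ (by simp [Sym2.eq_swap]))
        (hT _ (by simp [Sym2.eq_swap])) hrP
        (notMem_support_takeUntil_support_takeUntil_subset hqr.ne' hqP hr)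
    refine ⟨F1, F2, hF1, hF2, hF12, ?_, Or.inr (Sym2.eq_swap ▸ hrp1), Sym2.eq_swap ▸ hrq2⟩
    rw [hun]
    congr 1
    ext e
    simp only [Set.mem_insert_iff, Set.mem_singleton_iff, Sym2.eq_swap (a := p) (b := r),
      Sym2.eq_swap (a := r) (b := q), Sym2.eq_swap (a := q) (b := p)]
    tauto
  · obtain ⟨F1, F2, hF1, hF2, hF12, hun, hpq1, hqr2⟩ :=
      hC.exists_split_triangle_of_notMem_takeUntil hpq hqr hrp hqy hry
        (hT _ (by simp)) (hT _ (by simp)) (hT _ (by simp)) hqP hr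
    exact ⟨F1, F2, hF1, hF2, hF12, hun, Or.inl hpq1, hqr2⟩

end IsCycleEdgeSet

def IsMonochromaticTriangle (c : Sym2 V → ℕ) (x1 x2 x3 : V) : Prop :=
  c s(x1, x2) = c s(x2, x3) ∧ c s(x2, x3) = c s(x3, x1)

namespace IsMonochromaticTriangle

variable {c : Sym2 V → ℕ} {x1 x2 x3 : V}

lemma rotate (h : IsMonochromaticTriangle c x1 x2 x3) : IsMonochromaticTriangle c x2 x3 x1 :=
  ⟨h.2, (h.1.trans h.2).symm⟩

lemma swap (h : IsMonochromaticTriangle c x1 x2 x3) : IsMonochromaticTriangle c x1 x3 x2 := by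
  rw [IsMonochromaticTriangle, Sym2.eq_swap (a := x1) (b := x3),
    Sym2.eq_swap (a := x3) (b := x2), Sym2.eq_swap (a := x2) (b := x1)]
  exact ⟨h.2.symm, h.1.symm⟩

end IsMonochromaticTriangle

def reroutedColourClass (G : SimpleGraph V) (c : Sym2 V → ℕ) (p q y : V) : Set (Sym2 V) :=
  insert s(p, q) (insert s(q, y) ({e ∈ G.edgeSet | c e = c s(p, y)} \ {s(p, y)}))

lemma disjoint_reroutedColourClass {c : Sym2 V → ℕ} {p q r y : V} (hpr : p ≠ r) (hqr : q ≠ r)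
    (hry : r ≠ y) (hpqy : c s(p, q) ≠ c s(q, y)) (hqrp : c s(q, r) ≠ c s(p, y))
    (hryp : c s(r, y) ≠ c s(p, y)) (hpyq : c s(p, y) ≠ c s(q, y)) :
    Disjoint (reroutedColourClass G c p q y) (reroutedColourClass G c q r y) := by
  rw [Set.disjoint_left]
  rintro e (rfl | rfl | ⟨⟨-, he⟩, -⟩) (h | h | ⟨⟨-, he'⟩, hne'⟩)
  all_goals grind [Sym2.eq_iff]

lemma union_reroutedColourClass {c : Sym2 V → ℕ} {p q r y : V} (hpq : G.Adj p q)
    (hqr : G.Adj q r) (hrp : G.Adj r p) (hpy : G.Adj p y) (hqy : G.Adj q y) (hry : G.Adj r y) :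
    reroutedColourClass G c p q y ∪ reroutedColourClass G c q r y ∪
        reroutedColourClass G c r p y =
      {e ∈ G.edgeSet | c e = c s(p, y) ∨ c e = c s(q, y) ∨ c e = c s(r, y)} ∪
        {s(p, q), s(q, r), s(r, p)} := by
  ext e
  simp only [reroutedColourClass, Set.mem_union, Set.mem_insert_iff, Set.mem_sdiff,
    Set.mem_ofPred_eq, Set.mem_singleton_iff]
  constructor
  · rintro (((rfl | rfl | ⟨⟨he, hc⟩, -⟩) | (rfl | rfl | ⟨⟨he, hc⟩, -⟩)) |
      (rfl | rfl | ⟨⟨he, hc⟩, -⟩))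
    all_goals tauto
  · rintro (⟨he, hc | hc | hc⟩ | h)
    all_goals tauto

lemma colour_ne_of_colourClass_eq_triangle {c : Sym2 V → ℕ} {x1 x2 x3 u v : V}
    (hT : {e ∈ G.edgeSet | c e = c s(x1, x2)} = {s(x1, x2), s(x2, x3), s(x3, x1)})
    (huv : G.Adj u v) (hv1 : v ≠ x1) (hv2 : v ≠ x2) (hv3 : v ≠ x3) : c s(u, v) ≠ c s(x1, x2) := by
  intro h
  have : s(u, v) ∈ {e ∈ G.edgeSet | c e = c s(x1, x2)} := ⟨huv, h⟩
  rw [hT] at this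
  simp [hv1, hv2, hv3] at this

namespace IsLegalColouringWith

variable {c : Sym2 V → ℕ} {m : ℕ}

theorem exists_recolour (hc : IsLegalColouringWith G c m) {K : Set ℕ}
    (hK : ∀ j ∈ K, ∃ e ∈ G.edgeSet, c e = j)
    (F : ℕ → Set (Sym2 V)) (hF : ∀ j ∈ K, (F j).Nonempty → IsCycleEdgeSet G (F j))
    (hdisj : K.PairwiseDisjoint F) (hun : ⋃ j ∈ K, F j = {e ∈ G.edgeSet | c e ∈ K}) :
    ∃ c' : Sym2 V → ℕ, IsLegalColouringWith G c' m ∧ ∀ j ∈ K, ∀ e ∈ F j, c' e = j := by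
  classical
  have hmem : ∀ e, (∃ j ∈ K, e ∈ F j) ↔ e ∈ G.edgeSet ∧ c e ∈ K := fun e => by
    simpa using Set.ext_iff.mp hun e
  let c' : Sym2 V → ℕ := fun e => if h : ∃ j ∈ K, e ∈ F j then h.choose else c e
  have hc'F : ∀ j ∈ K, ∀ e ∈ F j, c' e = j := fun j hj e he => by
    have h : ∃ j ∈ K, e ∈ F j := ⟨j, hj, he⟩
    simp only [c', dif_pos h]
    exact hdisj.elim h.choose_spec.1 hj (Set.not_disjoint_iff.mpr ⟨e, h.choose_spec.2, he⟩)
  have hc'K : ∀ e, (∃ j ∈ K, e ∈ F j) → c' e ∈ K := fun e ⟨j, hj, he⟩ => hc'F j hj e he ▸ hj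
  have hc'c : ∀ e, (¬ ∃ j ∈ K, e ∈ F j) → c' e = c e := fun e h => dif_neg h
  have hclass : ∀ j ∈ K, {e ∈ G.edgeSet | c' e = j} = F j := by
    intro j hj
    ext e
    refine ⟨fun ⟨he, hej⟩ => ?_, fun he => ⟨((hmem e).mp ⟨j, hj, he⟩).1, hc'F j hj e he⟩⟩
    by_cases h : ∃ j ∈ K, e ∈ F j
    · obtain ⟨k, hk, hek⟩ := h
      rwa [← hej, hc'F k hk e hek]
    · exact absurd ((hmem e).mpr ⟨he, hc'c e h ▸ hej ▸ hj⟩) h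
  have hclass' : ∀ j ∉ K, {e ∈ G.edgeSet | c' e = j} = {e ∈ G.edgeSet | c e = j} := by
    intro j hj
    ext e
    refine ⟨fun ⟨he, hej⟩ => ⟨he, ?_⟩, fun ⟨he, hej⟩ => ⟨he, ?_⟩⟩
    · by_cases h : ∃ j ∈ K, e ∈ F j
      · exact absurd (hej ▸ hc'K e h) hj
      · rwa [← hc'c e h]
    · rwa [hc'c e fun h => hj (hej ▸ ((hmem e).mp h).2)]
  refine ⟨c', ⟨fun e he => ?_, fun j hne => ?_⟩, hc'F⟩
  · by_cases h : ∃ j ∈ K, e ∈ F j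
    · obtain ⟨e', he', hce'⟩ := hK _ (hc'K e h)
      exact hce' ▸ hc.1 e' he'
    · exact hc'c e h ▸ hc.1 e he
  · by_cases hj : j ∈ K
    · rw [hclass j hj] at hne ⊢
      exact hF j hj hne
    · rw [hclass' j hj] at hne ⊢
      exact hc.2 j hne

lemma colourClass_eq_triangle (hc : IsLegalColouringWith G c m) {x1 x2 x3 : V}
    (hmono : IsMonochromaticTriangle c x1 x2 x3) (h12 : G.Adj x1 x2) (h23 : G.Adj x2 x3)
    (h31 : G.Adj x3 x1) :
    {e ∈ G.edgeSet | c e = c s(x1, x2)} = {s(x1, x2), s(x2, x3), s(x3, x1)} :=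
  (hc.2 _ ⟨_, h12, rfl⟩).eq_triangle ⟨h12, rfl⟩ ⟨h23, hmono.1.symm⟩
    ⟨h31, (hmono.1.trans hmono.2).symm⟩

theorem exists_not_monochromatic_of_mem_colourClass (hc : IsLegalColouringWith G c m)
    {p q r y : V} (hmono : IsMonochromaticTriangle c p q r) (hpq : G.Adj p q) (hqr : G.Adj q r)
    (hrp : G.Adj r p) (hpy : G.Adj p y) (hqy : q ≠ y) (hry : r ≠ y)
    (hq : ∃ e ∈ {e ∈ G.edgeSet | c e = c s(p, y)}, q ∈ e) :
    ∃ c' : Sym2 V → ℕ, IsLegalColouringWith G c' m ∧ ¬ IsMonochromaticTriangle c' p q r := by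
  set i := c s(p, q)
  set a := c s(p, y)
  have hT := hc.colourClass_eq_triangle hmono hpq hqr hrp
  have hia : i ≠ a := (colour_ne_of_colourClass_eq_triangle hT hpy hpy.ne' hqy.symm hry.symm).symm
  have hAT : Disjoint {e ∈ G.edgeSet | c e = a} {s(p, q), s(q, r), s(r, p)} :=
    hT ▸ Set.disjoint_left.mpr fun e ha hi => hia (hi.2.symm.trans ha.2)
  obtain ⟨F1, F2, hF1, hF2, hF12, hun, h1, h2⟩ :=
    (hc.2 a ⟨_, hpy, rfl⟩).exists_split_triangle ⟨hpy, rfl⟩ hpq hqr hrp hqy hry hAT hq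
  obtain ⟨c', hc', hc'F⟩ := hc.exists_recolour (K := {i, a})
    (by rintro j (rfl | rfl); exacts [⟨_, hpq, rfl⟩, ⟨_, hpy, rfl⟩])
    (fun j => if j = i then F1 else F2)
    (by rintro j (rfl | rfl) - <;> simp [hF1, hF2, hia.symm])
    (Set.pairwiseDisjoint_insert.mpr ⟨Set.pairwiseDisjoint_singleton _ _,
      by simpa [hia.symm] using fun _ => hF12⟩)
    (by
      rw [Set.biUnion_insert, Set.biUnion_singleton, if_pos rfl, if_neg hia.symm, hun, ← hT]
      ext e
      simp only [Set.mem_union, Set.mem_sep_iff, Set.mem_insert_iff, Set.mem_singleton_iff]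
      tauto)
  have hc'i : ∀ e ∈ F1, c' e = i := by simpa using hc'F i (by simp)
  have hc'a : ∀ e ∈ F2, c' e = a := fun e he => hc'F a (by simp) e (by simp [hia.symm, he])
  refine ⟨c', hc', fun hmono' => hia ?_⟩
  rcases h1 with h1 | h1
  · rw [← hc'i _ h1, ← hc'a _ h2, hmono'.1]
  · rw [← hc'i _ h1, ← hc'a _ h2, hmono'.2]

theorem exists_recolour_reroutedColourClass (hc : IsLegalColouringWith G c m) {x1 x2 x3 y : V}
    (h12 : G.Adj x1 x2) (h13 : G.Adj x1 x3) (h1y : G.Adj x1 y) (h23 : G.Adj x2 x3)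
    (h2y : G.Adj x2 y) (h3y : G.Adj x3 y)
    (hT : {e ∈ G.edgeSet | c e = c s(x1, x2)} = {s(x1, x2), s(x2, x3), s(x3, x1)})
    (hab : c s(x1, y) ≠ c s(x2, y)) (had : c s(x1, y) ≠ c s(x3, y))
    (hbd : c s(x2, y) ≠ c s(x3, y))
    (hF1 : IsCycleEdgeSet G (reroutedColourClass G c x1 x2 y))
    (hF2 : IsCycleEdgeSet G (reroutedColourClass G c x2 x3 y))
    (hF3 : IsCycleEdgeSet G (reroutedColourClass G c x3 x1 y)) :
    ∃ c' : Sym2 V → ℕ, IsLegalColouringWith G c' m ∧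
      c' s(x1, x2) = c s(x1, y) ∧ c' s(x2, x3) = c s(x2, y) := by
  set i := c s(x1, x2)
  set a := c s(x1, y)
  set b := c s(x2, y)
  set d := c s(x3, y)
  have hyi : ∀ x, G.Adj x y → c s(x, y) ≠ i := fun x hx =>
    colour_ne_of_colourClass_eq_triangle hT hx h1y.ne' h2y.ne' h3y.ne'
  have hai : a ≠ i := hyi x1 h1y
  have hbi : b ≠ i := hyi x2 h2y
  have hdi : d ≠ i := hyi x3 h3y
  have hc23 : c s(x2, x3) = i := (Set.ext_iff.mp hT _).mpr (by simp) |>.2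
  have hc31 : c s(x3, x1) = i := (Set.ext_iff.mp hT _).mpr (by simp) |>.2
  set F1 := reroutedColourClass G c x1 x2 y
  set F2 := reroutedColourClass G c x2 x3 y
  set F3 := reroutedColourClass G c x3 x1 y
  have hF12 : Disjoint F1 F2 := disjoint_reroutedColourClass h13.ne h23.ne h3y.ne
    hbi.symm (hc23 ▸ hai.symm) had.symm hab
  have hF23 : Disjoint F2 F3 := disjoint_reroutedColourClass h12.ne' h13.ne' h1y.ne
    (hc23 ▸ hdi.symm) (hc31 ▸ hbi.symm) hab hbd
  have hF31 : Disjoint F3 F1 := disjoint_reroutedColourClass h23.ne' h12.ne h2y.ne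
    (hc31 ▸ hai.symm) hdi.symm hbd had.symm
  obtain ⟨c', hc', hc'F⟩ := hc.exists_recolour (K := {a, b, d, i})
    (by
      rintro j (rfl | rfl | rfl | rfl)
      exacts [⟨_, h1y, rfl⟩, ⟨_, h2y, rfl⟩, ⟨_, h3y, rfl⟩, ⟨_, h12, rfl⟩])
    (fun j => if j = a then F1 else if j = b then F2 else if j = d then F3 else ∅)
    (by
      rintro j (rfl | rfl | rfl | rfl) hne <;>
        simp_all [hab.symm, had.symm, hbd.symm, hai.symm, hbi.symm, hdi.symm])
    (by
      rintro j (rfl | rfl | rfl | rfl) k (rfl | rfl | rfl | rfl) hjk <;>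
        simp_all [Function.onFun, Disjoint.symm, hab.symm, had.symm, hbd.symm, hai.symm,
          hbi.symm, hdi.symm])
    (by
      rw [Set.biUnion_insert, Set.biUnion_insert, Set.biUnion_insert, Set.biUnion_singleton,
        if_pos rfl, if_neg hab.symm, if_pos rfl, if_neg had.symm, if_neg hbd.symm, if_pos rfl,
        if_neg hai.symm, if_neg hbi.symm, if_neg hdi.symm, Set.union_empty, ← Set.union_assoc,
        union_reroutedColourClass h12 h23 h13.symm h1y h2y h3y, ← hT]
      ext e
      simp only [Set.mem_union, Set.mem_ofPred_eq, Set.mem_insert_iff, Set.mem_singleton_iff]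
      tauto)
  exact ⟨c', hc', hc'F a (by simp) _ (by simp [F1, reroutedColourClass]),
    hc'F b (by simp) _ (by simp [hab.symm, F2, reroutedColourClass])⟩

theorem exists_not_monochromatic_of_notMem_colourClass (hc : IsLegalColouringWith G c m)
    {x1 x2 x3 y : V} (hmono : IsMonochromaticTriangle c x1 x2 x3) (h12 : G.Adj x1 x2)
    (h13 : G.Adj x1 x3) (h1y : G.Adj x1 y) (h23 : G.Adj x2 x3) (h2y : G.Adj x2 y)
    (h3y : G.Adj x3 y) (hA2 : ∀ e ∈ {e ∈ G.edgeSet | c e = c s(x1, y)}, x2 ∉ e)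
    (hA3 : ∀ e ∈ {e ∈ G.edgeSet | c e = c s(x1, y)}, x3 ∉ e)
    (hB3 : ∀ e ∈ {e ∈ G.edgeSet | c e = c s(x2, y)}, x3 ∉ e)
    (hD1 : ∀ e ∈ {e ∈ G.edgeSet | c e = c s(x3, y)}, x1 ∉ e) :
    ∃ c' : Sym2 V → ℕ, IsLegalColouringWith G c' m ∧ ¬ IsMonochromaticTriangle c' x1 x2 x3 := by
  have hab : c s(x1, y) ≠ c s(x2, y) := fun h => hA2 _ ⟨h2y, h.symm⟩ (Sym2.mem_mk_left _ _)
  have had : c s(x1, y) ≠ c s(x3, y) := fun h => hA3 _ ⟨h3y, h.symm⟩ (Sym2.mem_mk_left _ _)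
  have hbd : c s(x2, y) ≠ c s(x3, y) := fun h => hB3 _ ⟨h3y, h.symm⟩ (Sym2.mem_mk_left _ _)
  obtain ⟨c', hc', hc'a, hc'b⟩ := hc.exists_recolour_reroutedColourClass h12 h13 h1y h23 h2y h3y
    (hc.colourClass_eq_triangle hmono h12 h23 h13.symm) hab had hbd
    ((hc.2 _ ⟨_, h1y, rfl⟩).reroute ⟨h1y, rfl⟩ h12 h2y hA2)
    ((hc.2 _ ⟨_, h2y, rfl⟩).reroute ⟨h2y, rfl⟩ h23 h3y hB3)
    ((hc.2 _ ⟨_, h3y, rfl⟩).reroute ⟨h3y, rfl⟩ h13.symm h1y hD1)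
  exact ⟨c', hc', fun hmono' => hab (hc'a ▸ hc'b ▸ hmono'.1)⟩

end IsLegalColouringWith

end

theorem stmt_7 {V : Type*} [Fintype V] (H : SimpleGraph V) (c : Sym2 V → ℕ)
    (x1 x2 x3 y : V) (hc : IsLegalColouring H c)
    (h12 : H.Adj x1 x2) (h13 : H.Adj x1 x3) (h1y : H.Adj x1 y)
    (h23 : H.Adj x2 x3) (h2y : H.Adj x2 y) (h3y : H.Adj x3 y) :
    ∃ c' : Sym2 V → ℕ, IsLegalColouring H c' ∧
      ¬ (c' s(x1, x2) = c' s(x2, x3) ∧ c' s(x2, x3) = c' s(x3, x1)) := by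
  have hc : IsLegalColouringWith H c _ := hc
  by_cases hmono : IsMonochromaticTriangle c x1 x2 x3
  swap
  · exact ⟨c, hc, hmono⟩
  by_cases hA2 : ∃ e ∈ {e ∈ H.edgeSet | c e = c s(x1, y)}, x2 ∈ e
  · exact hc.exists_not_monochromatic_of_mem_colourClass hmono h12 h23 h13.symm h1y
      h2y.ne h3y.ne hA2
  by_cases hA3 : ∃ e ∈ {e ∈ H.edgeSet | c e = c s(x1, y)}, x3 ∈ e
  · obtain ⟨c', hc', hnot⟩ := hc.exists_not_monochromatic_of_mem_colourClass hmono.swap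
      h13 h23.symm h12.symm h1y h3y.ne h2y.ne hA3
    exact ⟨c', hc', fun h => hnot (IsMonochromaticTriangle.swap h)⟩
  by_cases hB3 : ∃ e ∈ {e ∈ H.edgeSet | c e = c s(x2, y)}, x3 ∈ e
  · obtain ⟨c', hc', hnot⟩ := hc.exists_not_monochromatic_of_mem_colourClass hmono.rotate
      h23 h13.symm h12 h2y h3y.ne h1y.ne hB3
    exact ⟨c', hc', fun h => hnot (IsMonochromaticTriangle.rotate h)⟩
  by_cases hD1 : ∃ e ∈ {e ∈ H.edgeSet | c e = c s(x3, y)}, x1 ∈ e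
  · obtain ⟨c', hc', hnot⟩ := hc.exists_not_monochromatic_of_mem_colourClass
      hmono.rotate.rotate h13.symm h12 h23 h3y h1y.ne h2y.ne hD1
    exact ⟨c', hc', fun h => hnot (IsMonochromaticTriangle.rotate h).rotate⟩
  push Not at hA2 hA3 hB3 hD1
  exact hc.exists_not_monochromatic_of_notMem_colourClass hmono h12 h13 h1y h23 h2y h3y
    hA2 hA3 hB3 hD1
end

section
/- If x is a vertex of degree at least 3 in a simple graph H that admits a legal colouring, then either the neighbourhood N(x) contains an independent set of size 3, or the induced subgraph H[{x} ∪ N(x)] contains a path of length 3 that is not monochromatic. -/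
open SimpleGraph

/-! A colour class is the edge set of a cycle, and a cycle uses exactly two edges at each of
its vertices. So if the paths `w x u v` and `w x v u` through a triangle `x u v` were both
monochromatic, the three edges `xu`, `xv`, `xw` would lie in one cycle. Hence either three
neighbours of `x` are pairwise non-adjacent, or two of them span a triangle with `x` and a
third neighbour extends it to a non-monochromatic path. -/

section

variable {V : Type*}

def HasNonMonochromaticPath3 (G : SimpleGraph V) (c : Sym2 V → ℕ) (S : Set V) : Prop :=
  ∃ p1 p2 p3 p4 : V, p1 ∈ S ∧ p2 ∈ S ∧ p3 ∈ S ∧ p4 ∈ S ∧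
    p1 ≠ p2 ∧ p1 ≠ p3 ∧ p1 ≠ p4 ∧ p2 ≠ p3 ∧ p2 ≠ p4 ∧ p3 ≠ p4 ∧
    G.Adj p1 p2 ∧ G.Adj p2 p3 ∧ G.Adj p3 p4 ∧
    ¬ (c s(p1, p2) = c s(p2, p3) ∧ c s(p2, p3) = c s(p3, p4))

variable {G : SimpleGraph V}

theorem SimpleGraph.Walk.IsCycle.eq_or_eq_or_eq_of_mem_edges {x y u v w : V} {p : G.Walk y y}
    (hp : p.IsCycle) (hu : s(x, u) ∈ p.edges) (hv : s(x, v) ∈ p.edges)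
    (hw : s(x, w) ∈ p.edges) : u = v ∨ u = w ∨ v = w := by
  by_contra! hne
  have hsub : ({u, v, w} : Set V) ⊆ p.toSubgraph.neighborSet x := by
    simp only [Set.insert_subset_iff, Set.singleton_subset_iff, Subgraph.mem_neighborSet,
      Walk.adj_toSubgraph_iff_mem_edges]
    exact ⟨hu, hv, hw⟩
  have hcard := Set.ncard_le_ncard hsub (Walk.finite_neighborSet_toSubgraph p)
  rw [Set.ncard_eq_three.mpr ⟨u, v, w, hne.1, hne.2.1, hne.2.2, rfl⟩,
    hp.ncard_neighborSet_toSubgraph_eq_two (p.fst_mem_support_of_mem_edges hu)] at hcard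
  omega

theorem IsLegalColouringWith.eq_or_eq_or_eq_of_colour_eq {c : Sym2 V → ℕ} {m : ℕ}
    (hc : IsLegalColouringWith G c m) {x u v w : V}
    (hu : G.Adj x u) (hv : G.Adj x v) (hw : G.Adj x w)
    (huv : c s(x, u) = c s(x, v)) (huw : c s(x, u) = c s(x, w)) : u = v ∨ u = w ∨ v = w := by
  obtain ⟨y, p, hp, hclass⟩ := hc.2 (c s(x, u)) ⟨s(x, u), hu, rfl⟩
  have hmem : ∀ {z}, G.Adj x z → c s(x, z) = c s(x, u) → s(x, z) ∈ p.edges := fun hz hcz =>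
    (Set.ext_iff.mp hclass _).mp ⟨hz, hcz⟩
  exact hp.eq_or_eq_or_eq_of_mem_edges (hmem hu rfl) (hmem hv huv.symm) (hmem hw huw.symm)

theorem IsLegalColouringWith.hasNonMonochromaticPath3_of_adj {c : Sym2 V → ℕ} {m : ℕ}
    (hc : IsLegalColouringWith G c m) {x u v w : V}
    (hu : G.Adj x u) (hv : G.Adj x v) (hw : G.Adj x w) (huv : G.Adj u v)
    (hwu : w ≠ u) (hwv : w ≠ v) : HasNonMonochromaticPath3 G c (insert x (G.neighborSet x)) := by
  have hx : x ∈ insert x (G.neighborSet x) := Set.mem_insert _ _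
  have hN : ∀ {z}, G.Adj x z → z ∈ insert x (G.neighborSet x) := Set.mem_insert_of_mem _
  by_cases hxuv : c s(w, x) = c s(x, u) ∧ c s(x, u) = c s(u, v)
  · refine ⟨w, x, v, u, hN hw, hx, hN hv, hN hu, hw.ne', hwv, hwu, hv.ne, hu.ne, huv.ne',
      hw.symm, hv, huv.symm, fun hxvu => ?_⟩
    have hwu' : c s(x, u) = c s(x, w) := by rw [← hxuv.1, Sym2.eq_swap]
    have hvu : c s(x, u) = c s(x, v) := hxuv.1.symm.trans hxvu.1
    rcases hc.eq_or_eq_or_eq_of_colour_eq hu hv hw hvu hwu' with h | h | h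
    exacts [huv.ne h, hwu h.symm, hwv h.symm]
  · exact ⟨w, x, u, v, hN hw, hx, hN hu, hN hv, hw.ne', hwu, hwv, hu.ne, hv.ne, huv.ne,
      hw.symm, hu, huv, hxuv⟩

end

theorem stmt_8 {V : Type*} [Fintype V] (H : SimpleGraph V) (c : Sym2 V → ℕ) (x : V)
    (hc : IsLegalColouring H c) (hdeg : 3 ≤ (H.neighborSet x).ncard) :
    (∃ a b d : V, a ∈ H.neighborSet x ∧ b ∈ H.neighborSet x ∧ d ∈ H.neighborSet x ∧
      a ≠ b ∧ a ≠ d ∧ b ≠ d ∧ ¬H.Adj a b ∧ ¬H.Adj a d ∧ ¬H.Adj b d) ∨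
    (∃ p1 p2 p3 p4 : V,
      p1 ∈ insert x (H.neighborSet x) ∧ p2 ∈ insert x (H.neighborSet x) ∧
      p3 ∈ insert x (H.neighborSet x) ∧ p4 ∈ insert x (H.neighborSet x) ∧
      p1 ≠ p2 ∧ p1 ≠ p3 ∧ p1 ≠ p4 ∧ p2 ≠ p3 ∧ p2 ≠ p4 ∧ p3 ≠ p4 ∧
      H.Adj p1 p2 ∧ H.Adj p2 p3 ∧ H.Adj p3 p4 ∧
      ¬ (c s(p1, p2) = c s(p2, p3) ∧ c s(p2, p3) = c s(p3, p4))) := by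
  obtain ⟨a, b, d, ha, hb, hd, hab, had, hbd⟩ := (Set.two_lt_ncard_iff).mp hdeg
  by_cases hadj_ab : H.Adj a b
  · exact Or.inr (hc.hasNonMonochromaticPath3_of_adj ha hb hd hadj_ab had.symm hbd.symm)
  by_cases hadj_ad : H.Adj a d
  · exact Or.inr (hc.hasNonMonochromaticPath3_of_adj ha hd hb hadj_ad hab.symm hbd)
  by_cases hadj_bd : H.Adj b d
  · exact Or.inr (hc.hasNonMonochromaticPath3_of_adj hb hd ha hadj_bd hab had)
  exact Or.inl ⟨a, b, d, ha, hb, hd, hab, had, hbd, hadj_ab, hadj_ad, hadj_bd⟩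
end

section
/- Let G be a simple Eulerian graph on an odd number n of vertices containing a vertex u of degree 2 with neighbours x1, x2. If x1x2 ∉ E(G) and G − u + x1x2 has a cycle decomposition with at most ⌊(n−2)/2⌋ cycles, then G has a cycle decomposition with at most ⌊(n−1)/2⌋ cycles. Likewise, if x1x2 ∈ E(G) and G − u − x1x2 has a cycle decomposition with at most ⌊(n−2)/2⌋ cycles, then G has a cycle decomposition with at most ⌊(n−1)/2⌋ cycles. -/
/-!
The cycle of the given decomposition that passes through `x₁x₂` (first case) is rerouted
through `u`, replacing the edge `x₁x₂` by the path `x₁ u x₂`; this keeps the number of cycles.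
In the second case the triangle `u x₁ x₂` is added as one more cycle, and since `n` is odd,
`⌊(n - 2)/2⌋ + 1 = ⌊(n - 1)/2⌋`.
-/

open SimpleGraph

namespace SimpleGraph.Walk

variable {V : Type*} {G : SimpleGraph V}

lemma IsCycle.snd_eq_or_penultimate_eq_of_mem_edges {a b : V} {c : G.Walk a a}
    (hc : c.IsCycle) (hab : s(a, b) ∈ c.edges) : c.snd = b ∨ c.penultimate = b := by
  have hcons := c.cons_tail_eq hc.not_nil
  rw [← hcons, edges_cons, List.mem_cons] at hab
  rcases hab with hfirst | hlater
  · exact Or.inl (Sym2.congr_right.mp hfirst.symm)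
  · have hnil : ¬ c.tail.Nil := edges_eq_nil.not.mp (List.ne_nil_of_mem hlater)
    right
    rw [← hcons, penultimate_cons_of_not_nil _ _ hnil]
    exact (hc.isPath_tail.eq_penultimate_of_mem_edges hlater).symm

lemma IsCycle.exists_cons_perm_of_mem_edges {v a b : V} {c : G.Walk v v} (hc : c.IsCycle)
    (hab : s(a, b) ∈ c.edges) :
    ∃ (h : G.Adj a b) (p : G.Walk b a), (cons h p).IsCycle ∧ (cons h p).edges.Perm c.edges := by
  classical
  have of_snd_eq : ∀ d : G.Walk a a, d.IsCycle → d.edges.Perm c.edges → d.snd = b →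
      ∃ (h : G.Adj a b) (p : G.Walk b a), (cons h p).IsCycle ∧ (cons h p).edges.Perm c.edges := by
    rintro d hd hperm rfl
    exact ⟨d.adj_snd hd.not_nil, d.tail, by rwa [d.cons_tail_eq hd.not_nil],
      by rwa [d.cons_tail_eq hd.not_nil]⟩
  have ha : a ∈ c.support := c.fst_mem_support_of_mem_edges hab
  have hperm : (c.rotate a ha).edges.Perm c.edges := (c.rotate_edges a ha).perm
  have hd := hc.rotate ha
  rcases hd.snd_eq_or_penultimate_eq_of_mem_edges (hperm.mem_iff.mpr hab) with h | h
  · exact of_snd_eq _ hd hperm h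
  · refine of_snd_eq _ hd.reverse ?_ (by rw [snd_reverse, h])
    rw [edges_reverse]
    exact (List.reverse_perm _).trans hperm

end SimpleGraph.Walk

open SimpleGraph.Walk

section CycleEdgeSets

variable {V : Type*} {G H : SimpleGraph V} {s : Set (Sym2 V)}

lemma IsCycleEdgeSet.mono (hs : IsCycleEdgeSet H s) (hsG : s ⊆ G.edgeSet) :
    IsCycleEdgeSet G s := by
  obtain ⟨v, c, hc, rfl⟩ := hs
  have hcG : ∀ e ∈ c.edges, e ∈ G.edgeSet := fun e he => hsG he
  exact ⟨v, c.transfer G hcG, hc.transfer hcG, by simp [edges_transfer]⟩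

lemma isCycleEdgeSet_triangle {a b c : V} (hab : G.Adj a b) (hac : G.Adj a c) (hbc : G.Adj b c) :
    IsCycleEdgeSet G {s(a, b), s(a, c), s(b, c)} := by
  refine ⟨a, cons hab (cons hbc (cons hac.symm nil)), ?_, ?_⟩
  · simp [cons_isCycle_iff, hab.ne, hac.ne, hbc.ne, hab.ne.symm, hac.ne.symm]
  · ext e
    simp only [Set.mem_insert_iff, Set.mem_singleton_iff, edges_cons, Sym2.eq_swap (a := c),
      edges_nil, List.mem_cons, List.not_mem_nil, or_false, Set.mem_ofPred_eq]
    tauto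

lemma IsCycleEdgeSet.subdivide {a b u : V} (hs : IsCycleEdgeSet H s) (hab : s(a, b) ∈ s)
    (hu : ∀ e ∈ s, u ∉ e) (hua : G.Adj u a) (hub : G.Adj u b) (hsG : s \ {s(a, b)} ⊆ G.edgeSet) :
    IsCycleEdgeSet G ({s(u, a), s(u, b)} ∪ (s \ {s(a, b)})) := by
  obtain ⟨v, c, hc, rfl⟩ := hs
  obtain ⟨h, p, hcp, hperm⟩ := hc.exists_cons_perm_of_mem_edges hab
  obtain ⟨hp, habp⟩ := (cons_isCycle_iff p h).mp hcp
  have hmem : ∀ e, e ∈ c.edges ↔ e = s(a, b) ∨ e ∈ p.edges := by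
    intro e
    rw [← hperm.mem_iff, edges_cons, List.mem_cons]
  have hpG : ∀ e ∈ p.edges, e ∈ G.edgeSet := fun e he =>
    hsG ⟨(hmem e).2 (Or.inr he), fun heq => habp (heq ▸ he)⟩
  have hup : u ∉ p.support := by
    rw [mem_support_iff_exists_mem_edges]
    rintro (rfl | ⟨e, he, hue⟩)
    · exact hu _ hab (Sym2.mem_mk_left _ _)
    · exact hu e ((hmem e).2 (Or.inr he)) hue
  refine ⟨a, cons hua.symm (cons hub (p.transfer G hpG)), ?_, ?_⟩
  · rw [cons_isCycle_iff, cons_isPath_iff, support_transfer, edges_cons, edges_transfer]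
    refine ⟨⟨hp.transfer hpG, hup⟩, ?_⟩
    simp only [List.mem_cons, Sym2.eq, Sym2.rel_iff', Prod.mk.injEq, Prod.swap_prod_mk, and_true,
      not_or, not_and]
    exact ⟨⟨fun hau => absurd hau.symm hua.ne, h.ne⟩,
      fun he => hup (p.snd_mem_support_of_mem_edges he)⟩
  · ext e
    have hp_edges : (e = s(a, b) ∨ e ∈ p.edges) ∧ e ≠ s(a, b) ↔ e ∈ p.edges :=
      ⟨fun he => he.1.resolve_left he.2, fun he => ⟨Or.inr he, fun heq => habp (heq ▸ he)⟩⟩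
    simp only [Set.mem_union, Set.mem_insert_iff, Set.mem_singleton_iff, Set.mem_sdiff,
      Set.mem_ofPred_eq, hmem, hp_edges, edges_cons, edges_transfer, List.mem_cons, Sym2.eq_swap,
      or_assoc]

end CycleEdgeSets

section SetFamilies

open Function

variable {α ι : Type*} {A B : Set α}

lemma pairwise_disjoint_update_union_sdiff [DecidableEq ι] {f : ι → Set α} (i : ι)
    (hf : Pairwise (Disjoint on f)) (hB : Disjoint B (⋃ j, f j)) :
    Pairwise (Disjoint on update f i (B ∪ (f i \ A))) := by
  have hBf : ∀ j, Disjoint B (f j) := fun j => hB.mono_right (Set.subset_iUnion f j)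
  have hnew : ∀ j ≠ i, Disjoint (B ∪ (f i \ A)) (f j) := fun j hj =>
    Set.disjoint_union_left.mpr ⟨hBf j, (hf hj.symm).mono_left Set.sdiff_subset⟩
  intro j k hjk
  simp only [onFun]
  rcases eq_or_ne j i with rfl | hj
  · rw [update_self, update_of_ne hjk.symm]
    exact hnew k hjk.symm
  · rcases eq_or_ne k i with rfl | hk
    · rw [update_self, update_of_ne hj]
      exact (hnew j hj).symm
    · rw [update_of_ne hj, update_of_ne hk]
      exact hf hjk

lemma iUnion_update_union_sdiff [DecidableEq ι] {f : ι → Set α} {i : ι}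
    (hf : Pairwise (Disjoint on f)) (hA : A ⊆ f i) :
    ⋃ j, update f i (B ∪ (f i \ A)) j = B ∪ ((⋃ j, f j) \ A) := by
  ext x
  simp only [Set.mem_iUnion, Set.mem_union, Set.mem_sdiff]
  constructor
  · rintro ⟨j, hx⟩
    rcases eq_or_ne j i with rfl | hj
    · simp only [update_self, Set.mem_union, Set.mem_sdiff] at hx
      exact hx.imp_right fun hx => ⟨⟨j, hx.1⟩, hx.2⟩
    · rw [update_of_ne hj] at hx
      exact Or.inr ⟨⟨j, hx⟩, fun hxA => Set.disjoint_left.mp (hf hj) hx (hA hxA)⟩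
  · rintro (hx | ⟨⟨j, hx⟩, hxA⟩)
    · exact ⟨i, by simp [hx]⟩
    · rcases eq_or_ne j i with rfl | hj
      · exact ⟨j, by simp [hx, hxA]⟩
      · exact ⟨j, by rwa [update_of_ne hj]⟩

lemma pairwise_disjoint_snoc {n : ℕ} {f : Fin n → Set α} (hf : Pairwise (Disjoint on f))
    (hB : Disjoint (⋃ i, f i) B) :
    Pairwise (Disjoint on (Fin.snoc f B : Fin (n + 1) → Set α)) := by
  have hfB : ∀ i, Disjoint (f i) B := fun i => hB.mono_left (Set.subset_iUnion f i)
  intro i j hij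
  induction i using Fin.lastCases <;> induction j using Fin.lastCases <;>
    simp only [onFun, Fin.snoc_last, Fin.snoc_castSucc]
  · exact absurd rfl hij
  · exact (hfB _).symm
  · exact hfB _
  · exact hf fun h => hij (congrArg _ h)

end SetFamilies

namespace HasCycleDecompLE

variable {V : Type*} {G H : SimpleGraph V} {m : ℕ}

lemma mono {m' : ℕ} (h : HasCycleDecompLE G m) (hm : m ≤ m') : HasCycleDecompLE G m' := by
  obtain ⟨n, f, hn, hf⟩ := h
  exact ⟨n, f, hn.trans hm, hf⟩

lemma add_cycle {C : Set (Sym2 V)} (hH : HasCycleDecompLE H m) (hC : IsCycleEdgeSet G C)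
    (hdisj : Disjoint H.edgeSet C) (hG : G.edgeSet = H.edgeSet ∪ C) :
    HasCycleDecompLE G (m + 1) := by
  obtain ⟨n, f, hn, hcyc, hf, hun⟩ := hH
  have hHG : H.edgeSet ⊆ G.edgeSet := hG ▸ Set.subset_union_left
  refine ⟨n + 1, Fin.snoc f C, by omega, fun i => ?_, pairwise_disjoint_snoc hf (hun ▸ hdisj),
    by rw [Set.iUnion_snoc, hun, hG]⟩
  induction i using Fin.lastCases with
  | last => simpa using hC
  | cast j =>
    simpa using (hcyc j).mono (((Set.subset_iUnion f j).trans hun.le).trans hHG)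

lemma of_deleteEdges_triangle {a b c : V} (hab : G.Adj a b) (hac : G.Adj a c) (hbc : G.Adj b c)
    (h : HasCycleDecompLE (G.deleteEdges {s(a, b), s(a, c), s(b, c)}) m) :
    HasCycleDecompLE G (m + 1) := by
  refine h.add_cycle (isCycleEdgeSet_triangle hab hac hbc) ?_ ?_ <;> rw [edgeSet_deleteEdges]
  · exact Set.disjoint_sdiff_left
  · rw [Set.sdiff_union_of_subset]
    simp [Set.insert_subset_iff, hab, hac, hbc]

lemma subdivide {a b u : V} (hH : HasCycleDecompLE H m) (hab : H.Adj a b)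
    (hu : ∀ w, ¬ H.Adj u w) (hG : G.edgeSet = {s(u, a), s(u, b)} ∪ (H.edgeSet \ {s(a, b)})) :
    HasCycleDecompLE G m := by
  classical
  obtain ⟨n, f, hn, hcyc, hf, hun⟩ := hH
  obtain ⟨i, hi⟩ : ∃ i, s(a, b) ∈ f i := Set.mem_iUnion.mp (hun ▸ hab)
  have hfH : ∀ j, f j ⊆ H.edgeSet := fun j => hun ▸ Set.subset_iUnion f j
  have hu_notMem : ∀ e ∈ H.edgeSet, u ∉ e := fun e he hue =>
    hu (Sym2.Mem.other hue) (by rwa [← SimpleGraph.mem_edgeSet, Sym2.other_spec hue])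
  have hnew : Disjoint {s(u, a), s(u, b)} (⋃ j, f j) := by
    rw [hun, Set.disjoint_left]
    rintro e (rfl | rfl) he <;> exact hu_notMem _ he (Sym2.mem_mk_left _ _)
  refine ⟨n, Function.update f i ({s(u, a), s(u, b)} ∪ (f i \ {s(a, b)})), hn, fun j => ?_,
    pairwise_disjoint_update_union_sdiff i hf hnew,
    by rw [iUnion_update_union_sdiff hf (Set.singleton_subset_iff.mpr hi), hun, hG]⟩
  rcases eq_or_ne j i with rfl | hj
  · rw [Function.update_self]
    refine (hcyc j).subdivide hi (fun e he => hu_notMem e (hfH j he)) ?_ ?_ ?_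
    · simp [← SimpleGraph.mem_edgeSet, hG]
    · simp [← SimpleGraph.mem_edgeSet, hG]
    · exact hG ▸ (Set.sdiff_subset_sdiff_left (hfH j)).trans Set.subset_union_right
  · rw [Function.update_of_ne hj]
    refine (hcyc j).mono fun e he => hG ▸ Or.inr ⟨hfH j he, ?_⟩
    rintro rfl
    exact Set.disjoint_left.mp (hf hj) he hi

lemma of_smoothing {a b u : V} (hN : G.neighborSet u = {a, b}) (hab : a ≠ b)
    (hna : ¬ G.Adj a b)
    (h : HasCycleDecompLE (fromEdgeSet ((G.edgeSet \ {s(u, a), s(u, b)}) ∪ {s(a, b)})) m) :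
    HasCycleDecompLE G m := by
  have hadj : ∀ w, G.Adj u w ↔ w = a ∨ w = b := fun w => by
    rw [← mem_neighborSet, hN, Set.mem_insert_iff, Set.mem_singleton_iff]
  have hua : G.Adj u a := (hadj a).mpr (Or.inl rfl)
  have hub : G.Adj u b := (hadj b).mpr (Or.inr rfl)
  refine h.subdivide (a := a) (b := b) (u := u) ⟨by simp, hab⟩ (fun w => ?_) ?_
  · rintro ⟨⟨huw, hne⟩ | huw, -⟩
    · rcases (hadj w).mp huw with rfl | rfl <;> simp at hne
    · rcases Sym2.eq_iff.mp huw with ⟨rfl, -⟩ | ⟨rfl, -⟩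
      exacts [hua.ne rfl, hub.ne rfl]
  · ext e
    simp only [edgeSet_fromEdgeSet, Set.mem_union, Set.mem_insert_iff, Set.mem_singleton_iff,
      Set.mem_sdiff, Sym2.mem_diagSet]
    constructor
    · intro he
      by_cases hu_e : e = s(u, a) ∨ e = s(u, b)
      · exact Or.inl hu_e
      · exact Or.inr ⟨⟨Or.inl ⟨he, hu_e⟩, G.not_isDiag_of_mem_edgeSet he⟩,
          fun heq => hna (by rwa [heq] at he)⟩
    · rintro ((rfl | rfl) | ⟨⟨⟨he, -⟩ | rfl, -⟩, hne⟩)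
      exacts [hua, hub, he, absurd rfl hne]

end HasCycleDecompLE

theorem stmt_9_general {V : Type*} [Fintype V] (G : SimpleGraph V) (u x1 x2 : V)
    (hodd : Odd (Fintype.card V))
    (hx : x1 ≠ x2) (hN : G.neighborSet u = {x1, x2}) :
    ((¬ G.Adj x1 x2 →
      HasCycleDecompLE
        (SimpleGraph.fromEdgeSet ((G.edgeSet \ {s(u, x1), s(u, x2)}) ∪ {s(x1, x2)}))
        ((Fintype.card V - 2) / 2) →
      HasCycleDecompLE G ((Fintype.card V - 1) / 2))) ∧
    ((G.Adj x1 x2 →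
      HasCycleDecompLE (G.deleteEdges {s(u, x1), s(u, x2), s(x1, x2)})
        ((Fintype.card V - 2) / 2) →
      HasCycleDecompLE G ((Fintype.card V - 1) / 2))) := by
  have hux1 : G.Adj u x1 := by rw [← mem_neighborSet, hN]; exact Set.mem_insert _ _
  have hux2 : G.Adj u x2 := by rw [← mem_neighborSet, hN]; exact Set.mem_insert_of_mem _ rfl
  have htwo : 1 < Fintype.card V := Fintype.one_lt_card_iff.mpr ⟨x1, x2, hx⟩
  obtain ⟨k, hk⟩ := hodd
  refine ⟨fun hna hdec => (hdec.of_smoothing hN hx hna).mono (by omega),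
    fun hx12 hdec => (hdec.of_deleteEdges_triangle hux1 hux2 hx12).mono (by omega)⟩

theorem stmt_9 {V : Type*} [Fintype V] (G : SimpleGraph V) (u x1 x2 : V)
    (hEuler : ∀ v : V, Even ((G.neighborSet v).ncard))
    (hodd : Odd (Fintype.card V))
    (hx : x1 ≠ x2) (hN : G.neighborSet u = {x1, x2}) :
    ((¬ G.Adj x1 x2 →
      HasCycleDecompLE
        (SimpleGraph.fromEdgeSet ((G.edgeSet \ {s(u, x1), s(u, x2)}) ∪ {s(x1, x2)}))
        ((Fintype.card V - 2) / 2) →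
      HasCycleDecompLE G ((Fintype.card V - 1) / 2))) ∧
    ((G.Adj x1 x2 →
      HasCycleDecompLE (G.deleteEdges {s(u, x1), s(u, x2), s(x1, x2)})
        ((Fintype.card V - 2) / 2) →
      HasCycleDecompLE G ((Fintype.card V - 1) / 2))) :=
  stmt_9_general G u x1 x2 hodd hx hN
end

section
/- Let G be an Eulerian graph with a vertex v of degree 4 and neighbourhood N = {x1, x2, x3, x4} such that x1x2 ∈ E(G) and x3x4 ∉ E(G). If G − {vx3, vx4} + {x3x4} has a legal colouring, then G has a legal colouring. -/
open SimpleGraph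

/-!
Write `G' = G - {vx₃, vx₄} + x₃x₄` (splitting off the pair `vx₃, vx₄` at `v`), and let `i` be the
colour of `x₃x₄` in a legal colouring of `G'` and `C` its cycle. If `C` avoids `v`, replacing the
edge `x₃x₄` of `C` by the path `x₃vx₄` gives a cycle of `G`, and colouring `vx₃, vx₄` with `i` is
legal. Otherwise `C` passes through `v` along `x₁vx₂`, the only edges at `v` in `G'`. Then `x₁x₂`
has another colour `j`, and its cycle `D` avoids `v`. Exchanging `x₁vx₂` and `x₁x₂` between `C`
and `D`, and replacing `x₃x₄` by `x₃vx₄` in `C`, gives two new cycles of colours `i` and `j`; all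
other colour classes stay as they are.
-/

namespace SimpleGraph.Walk

variable {V : Type*} {G : SimpleGraph V}

lemma IsCycle.exists_cons_of_mem_edges {a b : V} {c : G.Walk a a} (hc : c.IsCycle)
    (hab : s(a, b) ∈ c.edges) :
    ∃ (h : G.Adj a b) (p : G.Walk b a),
      (cons h p).IsCycle ∧ ∀ e, e ∈ (cons h p).edges ↔ e ∈ c.edges := by
  obtain ⟨d, h, q, rfl⟩ : ∃ (d : V) (h : G.Adj a d) (q : G.Walk d a), c = cons h q := by
    cases c with
    | nil => exact absurd rfl hc.ne_nil
    | cons h q => exact ⟨_, h, q, rfl⟩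
  rw [edges_cons, List.mem_cons] at hab
  rcases hab with hbd | hbq
  · obtain rfl : b = d := Sym2.congr_right.mp hbd
    exact ⟨h, q, hc, fun _ => Iff.rfl⟩
  -- `b` is then the neighbour of `a` on the other side: run the cycle backwards.
  have hq : q.IsPath := ((cons_isCycle_iff q h).mp hc).1
  have hrev : ∀ e, e ∈ q.edges ↔ e ∈ q.reverse.edges := by simp [edges_reverse]
  rw [hrev] at hbq
  obtain ⟨d', h', r, hr⟩ :
      ∃ (d' : V) (h' : G.Adj a d') (r : G.Walk d' d), q.reverse = cons h' r := by
    cases hqr : q.reverse with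
    | nil => simp [hqr] at hbq
    | cons h' r => exact ⟨_, h', r, rfl⟩
  obtain rfl : b = d' := by simpa [hr] using hq.reverse.eq_snd_of_mem_edges hbq
  refine ⟨h', r.concat h.symm, by simpa [reverse_cons, hr, concat_eq_append] using hc.reverse,
    fun e => ?_⟩
  simp only [edges_cons, edges_concat, List.concat_eq_append, List.mem_append, List.mem_cons,
    List.not_mem_nil, hrev, hr]
  rw [Sym2.eq_swap (a := d)]
  tauto

lemma exists_eq_append_cons_cons_of_mem_support {a b v : V} (p : G.Walk a b)
    (hv : v ∈ p.support) (hva : v ≠ a) (hvb : v ≠ b) :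
    ∃ (z y : V) (p₁ : G.Walk a z) (hz : G.Adj z v) (hy : G.Adj v y) (p₂ : G.Walk y b),
      p = p₁.append (cons hz (cons hy p₂)) := by
  induction p with
  | nil => simp_all
  | @cons a d b h q ih =>
    rw [support_cons, List.mem_cons] at hv
    obtain rfl | hvd := eq_or_ne v d
    · cases q with
      | nil => exact absurd rfl hvb
      | cons h' q => exact ⟨a, _, nil, h, h', q, rfl⟩
    · obtain ⟨z, y, p₁, hz, hy, p₂, rfl⟩ := ih (hv.resolve_left hva) hvd hvb
      exact ⟨z, y, cons h p₁, hz, hy, p₂, rfl⟩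

lemma IsPath.shortcut {a b z v y : V} {p₁ : G.Walk a z} {p₂ : G.Walk y b} {hz : G.Adj z v}
    {hy : G.Adj v y} (hp : (p₁.append (cons hz (cons hy p₂))).IsPath) (hzy : G.Adj z y) :
    (p₁.append (cons hzy p₂)).IsPath ∧ v ∉ (p₁.append (cons hzy p₂)).support := by
  rw [isPath_def, support_append, support_cons, support_cons, List.tail_cons,
    List.nodup_middle, List.nodup_cons] at hp
  rw [isPath_def, support_append, support_cons, List.tail_cons]
  exact ⟨hp.2, hp.1⟩

lemma IsPath.exists_shortcut {a b v x₁ x₂ : V} {p : G.Walk a b} (hp : p.IsPath)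
    (hv : v ∈ p.support) (hva : v ≠ a) (hvb : v ≠ b) (hN : ∀ y, G.Adj v y → y = x₁ ∨ y = x₂)
    (h₁₂ : G.Adj x₁ x₂) :
    ∃ q : G.Walk a b, q.IsPath ∧ v ∉ q.support ∧ s(x₁, x₂) ∈ q.edges ∧
      ∀ e, e ∈ p.edges ↔ e = s(v, x₁) ∨ e = s(v, x₂) ∨ (e ∈ q.edges ∧ e ≠ s(x₁, x₂)) := by
  obtain ⟨z, y, p₁, hz, hy, p₂, rfl⟩ := p.exists_eq_append_cons_cons_of_mem_support hv hva hvb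
  have hzy : z ≠ y := by
    rintro rfl
    have := hp.support_nodup
    rw [support_append, support_cons, List.tail_cons, List.nodup_append] at this
    exact this.2.2 _ p₁.end_mem_support _ (by simp) rfl
  obtain ⟨hzy, hs, hvzy⟩ : G.Adj z y ∧ s(z, y) = s(x₁, x₂) ∧
      (s(z, v) = s(v, x₁) ∧ s(v, y) = s(v, x₂) ∨ s(z, v) = s(v, x₂) ∧ s(v, y) = s(v, x₁)) := by
    rcases hN z hz.symm, hN y hy with ⟨rfl | rfl, rfl | rfl⟩
    all_goals first
      | exact absurd rfl hzy
      | exact ⟨h₁₂, rfl, .inl ⟨Sym2.eq_swap, rfl⟩⟩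
      | exact ⟨h₁₂.symm, Sym2.eq_swap, .inr ⟨Sym2.eq_swap, rfl⟩⟩
  obtain ⟨hq, hvq⟩ := hp.shortcut hzy
  have hvq' : ∀ e ∈ p₁.edges ++ p₂.edges, v ∉ e := fun e he hve =>
    hvq (mem_support_iff_exists_mem_edges.mpr (.inr ⟨e, by
      simp only [edges_append, edges_cons, List.mem_append, List.mem_cons] at he ⊢; tauto, hve⟩))
  have hnd := hq.edges_nodup
  simp only [edges_append, edges_cons, List.nodup_append, List.nodup_cons, List.mem_cons] at hnd
  refine ⟨_, hq, hvq, by simp [hs], fun e => ?_⟩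
  simp only [edges_append, edges_cons, List.mem_append, List.mem_cons] at hvq' ⊢
  grind

lemma IsPath.isCycle_cons_concat {a b v : V} {q : G.Walk a b} (hq : q.IsPath) (hab : a ≠ b)
    (hv : v ∉ q.support) (ha : G.Adj v a) (hb : G.Adj b v) : (cons ha (q.concat hb)).IsCycle := by
  refine (cons_isCycle_iff _ _).mpr ⟨hq.concat hv hb, ?_⟩
  rw [edges_concat, List.concat_eq_append, List.mem_append, List.mem_singleton, not_or]
  refine ⟨fun h => hv (q.fst_mem_support_of_mem_edges h), fun h => ?_⟩
  rcases Sym2.eq_iff.mp h with ⟨rfl, -⟩ | ⟨-, rfl⟩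
  · exact hv q.end_mem_support
  · exact hab rfl

end SimpleGraph.Walk

namespace IsCycleEdgeSet

variable {V : Type*} {G H : SimpleGraph V} {s : Set (Sym2 V)}

lemma subset_edgeSet (h : IsCycleEdgeSet G s) : s ⊆ G.edgeSet := by
  obtain ⟨u, w, -, rfl⟩ := h
  exact fun e he => w.edges_subset_edgeSet he

lemma mono_s10 (h : IsCycleEdgeSet G s) (hs : s ⊆ H.edgeSet) : IsCycleEdgeSet H s := by
  obtain ⟨u, w, hw, rfl⟩ := h
  exact ⟨u, w.transfer H fun e he => hs he, hw.transfer _, by simp [Walk.edges_transfer]⟩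

lemma exists_isPath {a b : V} (h : IsCycleEdgeSet G s) (hab : s(a, b) ∈ s) :
    ∃ p : G.Walk b a, p.IsPath ∧ s(a, b) ∉ p.edges ∧ ∀ e, e ∈ s ↔ e = s(a, b) ∨ e ∈ p.edges := by
  classical
  obtain ⟨u, w, hw, rfl⟩ := h
  have ha : a ∈ w.support := w.fst_mem_support_of_mem_edges hab
  have hrot : ∀ e, e ∈ (w.rotate a ha).edges ↔ e ∈ w.edges :=
    fun e => (w.rotate_edges a ha).mem_iff
  obtain ⟨h, p, hp, hedges⟩ := (hw.rotate ha).exists_cons_of_mem_edges ((hrot _).mpr hab)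
  obtain ⟨hpath, hnot⟩ := (Walk.cons_isCycle_iff p h).mp hp
  exact ⟨p, hpath, hnot, fun e => by simp [← hrot, ← hedges]⟩

lemma of_isPath {H : SimpleGraph V} {a b v : V} {q : H.Walk a b} (hq : q.IsPath)
    (hqG : ∀ e ∈ q.edges, e ∈ G.edgeSet) (hab : a ≠ b) (hv : v ∉ q.support) (ha : G.Adj v a)
    (hb : G.Adj v b) : IsCycleEdgeSet G (insert s(v, a) (insert s(v, b) {e | e ∈ q.edges})) := by
  refine ⟨v, .cons ha ((q.transfer G hqG).concat hb.symm),
    (hq.transfer hqG).isCycle_cons_concat hab (by rwa [Walk.support_transfer]) ha hb.symm, ?_⟩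
  ext e
  simp [Walk.edges_transfer, Walk.edges_concat, Sym2.eq_swap (a := b)]
  tauto

end IsCycleEdgeSet

section LegalColouring

variable {V : Type*} {G G' : SimpleGraph V} {c c' : Sym2 V → ℕ} {m : ℕ}

lemma IsLegalColouringWith.exists_isPath (hc : IsLegalColouringWith G c m) {a b : V}
    (hab : G.Adj a b) :
    ∃ p : G.Walk b a, p.IsPath ∧ s(a, b) ∉ p.edges ∧
      ∀ e, e ∈ G.edgeSet ∧ c e = c s(a, b) ↔ e = s(a, b) ∨ e ∈ p.edges :=
  (hc.2 _ ⟨_, hab, rfl⟩).exists_isPath (Set.mem_sep hab rfl)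

lemma IsLegalColouringWith.of_classes (h' : IsLegalColouringWith G' c' m) (L : Set ℕ)
    (hL : ∀ l ∈ L, 1 ≤ l ∧ l ≤ m) (hcyc : ∀ l ∈ L, IsCycleEdgeSet G {e ∈ G.edgeSet | c e = l})
    (hsame : ∀ l ∉ L, {e ∈ G.edgeSet | c e = l} = {e ∈ G'.edgeSet | c' e = l}) :
    IsLegalColouringWith G c m := by
  refine ⟨fun e he => ?_, fun l hl => ?_⟩
  · by_cases hce : c e ∈ L
    · exact hL _ hce
    · obtain ⟨he', hce'⟩ := (Set.ext_iff.mp (hsame _ hce) e).mp ⟨he, rfl⟩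
      exact hce' ▸ h'.1 e he'
  · by_cases hlL : l ∈ L
    · exact hcyc l hlL
    · rw [hsame l hlL] at hl ⊢
      exact (h'.2 l hl).mono_s10 (hsame l hlL ▸ fun e he => he.1)

lemma IsLegalColouringWith.exists_replace_class (h' : IsLegalColouringWith G' c' m) {i : ℕ}
    (hi : 1 ≤ i ∧ i ≤ m) {C : Set (Sym2 V)} (hC : IsCycleEdgeSet G C)
    (hrest : ∀ e, e ∈ G.edgeSet ∧ e ∉ C ↔ e ∈ G'.edgeSet ∧ c' e ≠ i) :
    ∃ c, IsLegalColouringWith G c m := by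
  classical
  refine ⟨fun e => if e ∈ C then i else c' e, h'.of_classes {i} (by simpa using hi) ?_ ?_⟩
  · rintro l rfl
    convert hC using 1
    ext e
    have := hC.subset_edgeSet (a := e)
    grind
  · intro l hl
    ext e
    grind

lemma IsLegalColouringWith.exists_replace_two_classes (h' : IsLegalColouringWith G' c' m)
    {i j : ℕ} (hi : 1 ≤ i ∧ i ≤ m) (hj : 1 ≤ j ∧ j ≤ m) (hij : i ≠ j) {Ci Cj : Set (Sym2 V)}
    (hCi : IsCycleEdgeSet G Ci) (hCj : IsCycleEdgeSet G Cj) (hdisj : Disjoint Ci Cj)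
    (hrest : ∀ e, e ∈ G.edgeSet ∧ e ∉ Ci ∧ e ∉ Cj ↔ e ∈ G'.edgeSet ∧ c' e ≠ i ∧ c' e ≠ j) :
    ∃ c, IsLegalColouringWith G c m := by
  classical
  refine ⟨fun e => if e ∈ Ci then i else if e ∈ Cj then j else c' e,
    h'.of_classes {i, j} (by simp [hi, hj]) ?_ ?_⟩
  · rintro l (rfl | rfl)
    · convert hCi using 1
      ext e
      have := hCi.subset_edgeSet (a := e)
      grind
    · convert hCj using 1
      ext e
      have := hCj.subset_edgeSet (a := e)
      have : e ∈ Ci → e ∉ Cj := fun h => Set.disjoint_left.mp hdisj h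
      grind
  · intro l hl
    ext e
    grind

end LegalColouring

section SplitOff

variable {V : Type*} {G G' : SimpleGraph V} {c' : Sym2 V → ℕ} {m : ℕ} {v x₁ x₂ x₃ x₄ : V}

lemma mem_edgeSet_fromEdgeSet_splitOff (hab : x₃ ≠ x₄) (e : Sym2 V) :
    e ∈ (fromEdgeSet (G.edgeSet \ {s(v, x₃), s(v, x₄)} ∪ {s(x₃, x₄)})).edgeSet ↔
      (e ∈ G.edgeSet ∧ e ≠ s(v, x₃) ∧ e ≠ s(v, x₄)) ∨ e = s(x₃, x₄) := by
  have := G.not_isDiag_of_mem_edgeSet (e := e)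
  simp only [edgeSet_fromEdgeSet, Set.mem_sdiff, Set.mem_union, Set.mem_insert_iff,
    Set.mem_singleton_iff, Sym2.mem_diagSet]
  grind [Sym2.mk_isDiag_iff]

lemma eq_or_eq_of_adj_splitOff
    (hG' : ∀ e, e ∈ G'.edgeSet ↔ (e ∈ G.edgeSet ∧ e ≠ s(v, x₃) ∧ e ≠ s(v, x₄)) ∨ e = s(x₃, x₄))
    (hN : G.neighborSet v = {x₁, x₂, x₃, x₄}) {y : V} (hy : G'.Adj v y) : y = x₁ ∨ y = x₂ := by
  have hadj : ∀ y, G.Adj v y ↔ y = x₁ ∨ y = x₂ ∨ y = x₃ ∨ y = x₄ := by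
    simp [← mem_neighborSet, hN]
  rcases (hG' s(v, y)).mp hy with ⟨hvy, h₃, h₄⟩ | h
  · rcases (hadj y).mp hvy with rfl | rfl | rfl | rfl <;> simp_all
  · rcases Sym2.eq_iff.mp h with ⟨rfl, -⟩ | ⟨rfl, -⟩
    all_goals exact (G.irrefl ((hadj _).mpr (by simp))).elim

lemma IsLegalColouringWith.exists_of_splitOff_of_notMem_support
    (hc' : IsLegalColouringWith G' c' m)
    (hG' : ∀ e, e ∈ G'.edgeSet ↔ (e ∈ G.edgeSet ∧ e ≠ s(v, x₃) ∧ e ≠ s(v, x₄)) ∨ e = s(x₃, x₄))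
    (h₃₄ : ¬G.Adj x₃ x₄) (hv₃ : G.Adj v x₃) (hv₄ : G.Adj v x₄) {p : G'.Walk x₄ x₃}
    (hp : p.IsPath) (h₃₄p : s(x₃, x₄) ∉ p.edges)
    (hcls : ∀ e, e ∈ G'.edgeSet ∧ c' e = c' s(x₃, x₄) ↔ e = s(x₃, x₄) ∨ e ∈ p.edges)
    (hvp : v ∉ p.support) : ∃ c, IsLegalColouringWith G c m := by
  have h₃₄' : G'.Adj x₃ x₄ := (hG' s(x₃, x₄)).mpr (.inr rfl)
  have hpG : ∀ e ∈ p.edges, e ∈ G.edgeSet := fun e he =>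
    (((hG' e).mp (p.edges_subset_edgeSet he)).resolve_right (ne_of_mem_of_not_mem he h₃₄p)).1
  refine IsLegalColouringWith.exists_replace_class hc' (hc'.1 s(x₃, x₄) h₃₄')
    (.of_isPath hp hpG h₃₄'.ne.symm hvp hv₄ hv₃) fun e => ?_
  have : s(x₃, x₄) ∉ G.edgeSet := h₃₄
  have : s(v, x₃) ∈ G.edgeSet := hv₃
  have : s(v, x₄) ∈ G.edgeSet := hv₄
  simp only [Set.mem_insert_iff, Set.mem_ofPred_eq]
  grind

lemma IsLegalColouringWith.exists_of_splitOff_of_exchange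
    (hc' : IsLegalColouringWith G' c' m)
    (hG' : ∀ e, e ∈ G'.edgeSet ↔ (e ∈ G.edgeSet ∧ e ≠ s(v, x₃) ∧ e ≠ s(v, x₄)) ∨ e = s(x₃, x₄))
    (hne : x₁ ≠ x₂ ∧ x₁ ≠ x₃ ∧ x₁ ≠ x₄ ∧ x₂ ≠ x₃ ∧ x₂ ≠ x₄ ∧ x₃ ≠ x₄)
    (hv₁ : G.Adj v x₁) (hv₂ : G.Adj v x₂) (hv₃ : G.Adj v x₃) (hv₄ : G.Adj v x₄)
    (h₁₂ : G'.Adj x₁ x₂) (h₃₄ : ¬G.Adj x₃ x₄) (hji : c' s(x₁, x₂) ≠ c' s(x₃, x₄))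
    {q : G'.Walk x₄ x₃} (hq : q.IsPath) (hvq : v ∉ q.support) (h₁₂q : s(x₁, x₂) ∈ q.edges)
    (h₃₄q : s(x₃, x₄) ∉ q.edges) (hcls : ∀ e, e ∈ G'.edgeSet ∧ c' e = c' s(x₃, x₄) ↔
      e = s(x₃, x₄) ∨ e = s(v, x₁) ∨ e = s(v, x₂) ∨ (e ∈ q.edges ∧ e ≠ s(x₁, x₂)))
    {r : G'.Walk x₂ x₁} (hr : r.IsPath) (hvr : v ∉ r.support) (h₁₂r : s(x₁, x₂) ∉ r.edges)
    (hclsj : ∀ e, e ∈ G'.edgeSet ∧ c' e = c' s(x₁, x₂) ↔ e = s(x₁, x₂) ∨ e ∈ r.edges) :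
    ∃ c, IsLegalColouringWith G c m := by
  obtain ⟨hne₁₂, hne₁₃, -, hne₂₃, -, hne₃₄⟩ := hne
  have h₃₄' : G'.Adj x₃ x₄ := (hG' s(x₃, x₄)).mpr (.inr rfl)
  have hvq' : ∀ e ∈ q.edges, v ∉ e := fun e he hve =>
    hvq (Walk.mem_support_iff_exists_mem_edges.mpr (.inr ⟨e, he, hve⟩))
  have hvr' : ∀ e ∈ r.edges, v ∉ e := fun e he hve =>
    hvr (Walk.mem_support_iff_exists_mem_edges.mpr (.inr ⟨e, he, hve⟩))
  have hG'G : ∀ e ∈ G'.edgeSet, e ≠ s(x₃, x₄) → e ∈ G.edgeSet := fun e he h =>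
    (((hG' e).mp he).resolve_right h).1
  have hqG : ∀ e ∈ q.edges, e ∈ G.edgeSet := fun e he =>
    hG'G e (q.edges_subset_edgeSet he) (ne_of_mem_of_not_mem he h₃₄q)
  have hrG : ∀ e ∈ r.edges, e ∈ G.edgeSet := fun e he =>
    hG'G e (r.edges_subset_edgeSet he) (by grind)
  have : s(x₃, x₄) ∉ G.edgeSet := h₃₄
  refine IsLegalColouringWith.exists_replace_two_classes hc' (hc'.1 s(x₃, x₄) h₃₄')
    (hc'.1 s(x₁, x₂) h₁₂) hji.symm (.of_isPath hq hqG hne₃₄.symm hvq hv₄ hv₃)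
    (.of_isPath hr hrG hne₁₂.symm hvr hv₂ hv₁) (Set.disjoint_left.mpr fun e he₁ he₂ => ?_)
    fun e => ?_
  · simp only [Set.mem_insert_iff, Set.mem_ofPred_eq] at he₁ he₂
    have := q.edges_subset_edgeSet (e := e)
    grind [Sym2.congr_right, Sym2.mem_mk_left]
  · simp only [Set.mem_insert_iff, Set.mem_ofPred_eq]
    grind [Sym2.mem_mk_left]

lemma IsLegalColouringWith.exists_of_splitOff_of_mem_support
    (hc' : IsLegalColouringWith G' c' m)
    (hG' : ∀ e, e ∈ G'.edgeSet ↔ (e ∈ G.edgeSet ∧ e ≠ s(v, x₃) ∧ e ≠ s(v, x₄)) ∨ e = s(x₃, x₄))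
    (hne : x₁ ≠ x₂ ∧ x₁ ≠ x₃ ∧ x₁ ≠ x₄ ∧ x₂ ≠ x₃ ∧ x₂ ≠ x₄ ∧ x₃ ≠ x₄)
    (hN : G.neighborSet v = {x₁, x₂, x₃, x₄}) (h₁₂ : G.Adj x₁ x₂) (h₃₄ : ¬G.Adj x₃ x₄)
    {p : G'.Walk x₄ x₃} (hp : p.IsPath) (h₃₄p : s(x₃, x₄) ∉ p.edges)
    (hcls : ∀ e, e ∈ G'.edgeSet ∧ c' e = c' s(x₃, x₄) ↔ e = s(x₃, x₄) ∨ e ∈ p.edges)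
    (hvp : v ∈ p.support) : ∃ c, IsLegalColouringWith G c m := by
  obtain ⟨hv₁, hv₂, hv₃, hv₄⟩ : G.Adj v x₁ ∧ G.Adj v x₂ ∧ G.Adj v x₃ ∧ G.Adj v x₄ := by
    simp [← mem_neighborSet, hN]
  have h₁₂' : G'.Adj x₁ x₂ := by
    have h := hG' s(x₁, x₂)
    have := hv₁.ne
    have := hv₂.ne
    simp only [mem_edgeSet, Sym2.eq_iff] at h
    grind
  have hvG' : ∀ y, G'.Adj v y → y = x₁ ∨ y = x₂ := fun _ => eq_or_eq_of_adj_splitOff hG' hN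
  obtain ⟨q, hq, hvq, h₁₂q, hpq⟩ := hp.exists_shortcut hvp hv₄.ne hv₃.ne hvG' h₁₂'
  have hji : c' s(x₁, x₂) ≠ c' s(x₃, x₄) := fun h => by
    have h₁ := (hcls s(x₁, x₂)).mp ⟨h₁₂', h⟩
    have h₂ := hpq s(x₁, x₂)
    have := hv₁.ne
    have := hv₂.ne
    simp only [Sym2.eq_iff] at h₁ h₂
    grind
  obtain ⟨r, hr, h₁₂r, hclsj⟩ := hc'.exists_isPath h₁₂'
  -- the edges at `v` in `G'` lie on `p`, so they have the colour of `x₃x₄`, unlike those of `r`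
  have hvr : v ∉ r.support := fun hv => by
    obtain ⟨e, he, hve⟩ :=
      (Walk.mem_support_iff_exists_mem_edges_of_not_nil (Walk.not_nil_of_ne hne.1.symm)).mp hv
    obtain ⟨y, rfl⟩ := Sym2.mem_iff_exists.mp hve
    have := hvG' y (r.edges_subset_edgeSet he)
    grind
  have h₃₄q : s(x₃, x₄) ∉ q.edges := fun h => by
    have := hpq s(x₃, x₄)
    simp only [Sym2.eq_iff] at this
    grind
  exact hc'.exists_of_splitOff_of_exchange hG' hne hv₁ hv₂ hv₃ hv₄ h₁₂' h₃₄ hji hq hvq h₁₂q h₃₄q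
    (fun e => by rw [hcls, hpq]) hr hvr h₁₂r hclsj

end SplitOff

theorem stmt_10_general {V : Type*} [Fintype V] (G : SimpleGraph V) (v x1 x2 x3 x4 : V)
    (hne : x1 ≠ x2 ∧ x1 ≠ x3 ∧ x1 ≠ x4 ∧ x2 ≠ x3 ∧ x2 ≠ x4 ∧ x3 ≠ x4)
    (hN : G.neighborSet v = {x1, x2, x3, x4})
    (h12 : G.Adj x1 x2) (h34 : ¬ G.Adj x3 x4)
    (hcol : ∃ c : Sym2 V → ℕ,
      IsLegalColouring
        (SimpleGraph.fromEdgeSet ((G.edgeSet \ {s(v, x3), s(v, x4)}) ∪ {s(x3, x4)})) c) :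
    ∃ c : Sym2 V → ℕ, IsLegalColouring G c := by
  obtain ⟨c', hc'⟩ := hcol
  have hG' := mem_edgeSet_fromEdgeSet_splitOff (G := G) (v := v) hne.2.2.2.2.2
  have h₃₄' := (hG' s(x3, x4)).mpr (.inr rfl)
  obtain ⟨p, hp, h₃₄p, hcls⟩ := IsLegalColouringWith.exists_isPath hc' h₃₄'
  by_cases hvp : v ∈ p.support
  · exact IsLegalColouringWith.exists_of_splitOff_of_mem_support hc' hG' hne hN h12 h34 hp h₃₄p
      hcls hvp
  · have hv : ∀ y ∈ ({x1, x2, x3, x4} : Set V), G.Adj v y := fun y hy => by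
      rwa [← mem_neighborSet, hN]
    exact IsLegalColouringWith.exists_of_splitOff_of_notMem_support hc' hG' h34
      (hv x3 (by simp)) (hv x4 (by simp)) hp h₃₄p hcls hvp

theorem stmt_10 {V : Type*} [Fintype V] (G : SimpleGraph V) (v x1 x2 x3 x4 : V)
    (hEuler : ∀ w : V, Even ((G.neighborSet w).ncard))
    (hne : x1 ≠ x2 ∧ x1 ≠ x3 ∧ x1 ≠ x4 ∧ x2 ≠ x3 ∧ x2 ≠ x4 ∧ x3 ≠ x4)
    (hN : G.neighborSet v = {x1, x2, x3, x4})
    (h12 : G.Adj x1 x2) (h34 : ¬ G.Adj x3 x4)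
    (hcol : ∃ c : Sym2 V → ℕ,
      IsLegalColouring
        (SimpleGraph.fromEdgeSet ((G.edgeSet \ {s(v, x3), s(v, x4)}) ∪ {s(x3, x4)})) c) :
    ∃ c : Sym2 V → ℕ, IsLegalColouring G c :=
  stmt_10_general G v x1 x2 x3 x4 hne hN h12 h34 hcol
end
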